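/- arXiv:2305.07875 — 2 statements merged into one kernel-verified Lean document; each statement's English description precedes it below -/
import Mathlib

section
/- Let s ∈ ℕ, s ≥ 1, and L = {0,1,…,s−1}. Consider the lifted constrained switched linear system with, for each label l ∈ L, matrices Ã_l ∈ ℝ^{n×n}, B̃^w_l ∈ ℝ^{n×(l+1)q}, C̃_l ∈ ℝ^{(l+1)p×n}, D̃^w_l ∈ ℝ^{(l+1)p×(l+1)q}, and dynamics x̃_{k+1} = Ã_{σ_k} x̃_k + B̃^w_{σ_k} w̃_k, z̃_k = C̃_{σ_k} x̃_k + D̃^w_{σ_k} w̃_k, where w̃_k ∈ ℝ^{(σ_k+1)q} and z̃_k ∈ ℝ^{(σ_k+1)p}, and let G̃ = (V,E) be a switching graph over L. Suppose γ > 0 and there exist symmetric matrices S_i ∈ ℝ^{n×n} and matrices G_i ∈ ℝ^{n×n} for each node i ∈ V such that for every edge (i,j,l) ∈ E the block matrix [[G_i + G_iᵀ − S_i, 0, (Ã_l G_i)ᵀ, (C̃_l G_i)ᵀ], [0, γ I_{(l+1)q}, (B̃^w_l)ᵀ, (D̃^w_l)ᵀ], [Ã_l G_i, B̃^w_l, S_j,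 0], [C̃_l G_i, D̃^w_l, 0, γ I_{(l+1)p}]] is positive definite. Then the lifted system has ℓ2-performance with gain γ with respect to the set of switching sequences admissible for G̃: (i) for every admissible σ, every x̃_0, and w̃ ≡ 0, x̃_k → 0 as k → ∞, and (ii) for every admissible σ, x̃_0 = 0, and every w̃ with 0 < ∑_{k=0}^∞ ‖w̃_k‖² < ∞, it holds that ∑_{k=0}^∞ ‖z̃_k‖² < γ² ∑_{k=0}^∞ ‖w̃_k‖². -/
open Matrix Filter Topology

/-! With `P i = (S i)⁻¹`, the quadratic form `V i x = xᵀ P i x` is a storage function. The LMI is a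
Schur-complement form of the dissipation inequality
`γ V j (Ãx + B̃w) + ‖C̃x + D̃w‖² < γ V i x + γ² ‖w‖²` for `(x, w) ≠ 0` along every edge `(i, j, l)`,
once `G + Gᵀ - S ≤ Gᵀ S⁻¹ G` (from `(G - S)ᵀ S⁻¹ (G - S) ≥ 0`) is used to eliminate the slack
variable `G`; the same bound shows that `G` is invertible.

For `w = 0` the storage decreases by at least `ε ‖x‖²` along every edge, with one `ε > 0` for all
of the finitely many edges (compactness of the unit sphere), so `‖x k‖²` is summable along an
admissible path and `x k → 0`. For `x 0 = 0`, telescoping the dissipation inequality bounds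
`∑ ‖z k‖²` by `γ² ∑ ‖w k‖²`, strictly because the inequality is strict at a step with `w k ≠ 0`. -/

namespace Matrix

theorem PosDef.toBlocks₁₁ {m n R : Type*} [Ring R] [PartialOrder R] [StarRing R]
    {M : Matrix (m ⊕ n) (m ⊕ n) R} (hM : M.PosDef) :
    M.toBlocks₁₁.PosDef :=
  hM.submatrix Sum.inl_injective

theorem PosDef.toBlocks₂₂ {m n R : Type*} [Ring R] [PartialOrder R] [StarRing R]
    {M : Matrix (m ⊕ n) (m ⊕ n) R} (hM : M.PosDef) :
    M.toBlocks₂₂.PosDef :=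
  hM.submatrix Sum.inr_injective

theorem dotProduct_self_eq_sum_sq {m R : Type*} [Fintype m] [Semiring R] (v : m → R) :
    v ⬝ᵥ v = ∑ i, v i ^ 2 := by
  simp [dotProduct, sq]

theorem dotProduct_transpose_mul_mul_mulVec {m n R : Type*} [Fintype m] [Fintype n]
    [CommSemiring R] (A : Matrix m n R) (P : Matrix m m R) (x y : n → R) :
    x ⬝ᵥ (Aᵀ * P * A) *ᵥ y = A *ᵥ x ⬝ᵥ P *ᵥ (A *ᵥ y) := by
  rw [← mulVec_mulVec, ← mulVec_mulVec, dotProduct_transpose_mulVec, dotProduct_comm]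

variable {m n : Type*} [Fintype m] [Fintype n]

theorem PosDef.dotProduct_inv_mulVec_lt [DecidableEq n] {X : Matrix m m ℝ} {Y : Matrix n m ℝ}
    {Z : Matrix n n ℝ} (h : (fromBlocks X Yᵀ Y Z).PosDef) {a : m → ℝ} (ha : a ≠ 0) :
    Y *ᵥ a ⬝ᵥ Z⁻¹ *ᵥ (Y *ᵥ a) < a ⬝ᵥ X *ᵥ a := by
  have hZ : Z.PosDef := by simpa using h.toBlocks₂₂
  set b := Z⁻¹ *ᵥ (Y *ᵥ a)
  have hZb : Z *ᵥ b = Y *ᵥ a := by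
    rw [mulVec_mulVec, mul_nonsing_inv _ hZ.det_pos.ne'.isUnit, one_mulVec]
  -- the form at `(a, -b)` is `aᵀ X a - (Y a)ᵀ Z⁻¹ (Y a)`
  have hpos := h.dotProduct_mulVec_pos (x := Sum.elim a (-b))
    fun h0 => ha (by simpa using congr_arg (· ∘ Sum.inl) h0)
  simp only [star_trivial, fromBlocks_mulVec, sumElim_dotProduct_sumElim, Sum.elim_comp_inl,
    Sum.elim_comp_inr, mulVec_neg, hZb, dotProduct_add, dotProduct_neg, neg_dotProduct,
    dotProduct_transpose_mulVec] at hpos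
  rw [dotProduct_comm]
  linarith

theorem dotProduct_add_transpose_sub_mulVec_le [DecidableEq m] {S : Matrix m m ℝ} (hS : S.PosDef)
    (G : Matrix m m ℝ) (ξ : m → ℝ) :
    ξ ⬝ᵥ (G + Gᵀ - S) *ᵥ ξ ≤ G *ᵥ ξ ⬝ᵥ S⁻¹ *ᵥ (G *ᵥ ξ) := by
  have hSym : S⁻¹ᵀ = S⁻¹ := by
    rw [transpose_nonsing_inv, (isHermitian_iff_isSymm.mp hS.isHermitian).eq]
  have hSinv : S⁻¹ *ᵥ (S *ᵥ ξ) = ξ := by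
    rw [mulVec_mulVec, nonsing_inv_mul _ hS.det_pos.ne'.isUnit, one_mulVec]
  have hcross : S *ᵥ ξ ⬝ᵥ S⁻¹ *ᵥ (G *ᵥ ξ) = ξ ⬝ᵥ G *ᵥ ξ := by
    rw [← dotProduct_transpose_mulVec, hSym, hSinv, dotProduct_comm]
  have h0 := hS.inv.posSemidef.dotProduct_mulVec_nonneg (G *ᵥ ξ - S *ᵥ ξ)
  simp only [star_trivial, mulVec_sub, sub_dotProduct, dotProduct_sub, hSinv, hcross] at h0
  simp only [add_mulVec, sub_mulVec, dotProduct_add, dotProduct_sub, dotProduct_transpose_mulVec]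
  linarith [dotProduct_comm (S⁻¹ *ᵥ (G *ᵥ ξ)) (G *ᵥ ξ), dotProduct_comm (G *ᵥ ξ) ξ,
    dotProduct_comm (S *ᵥ ξ) ξ]

theorem isUnit_of_posDef_add_transpose_sub [DecidableEq m] {S G : Matrix m m ℝ} (hS : S.PosDef)
    (h : (G + Gᵀ - S).PosDef) : IsUnit G := by
  rw [isUnit_iff_isUnit_det, isUnit_iff_ne_zero, Ne, ← exists_mulVec_eq_zero_iff]
  rintro ⟨ξ, hξ, hGξ⟩
  have hle := dotProduct_add_transpose_sub_mulVec_le hS G ξ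
  have hpos := h.dotProduct_mulVec_pos hξ
  simp only [hGξ, mulVec_zero, dotProduct_zero, star_trivial] at hle hpos
  linarith

theorem exists_pos_mul_norm_sq_le_dotProduct_mulVec {Q : Matrix m m ℝ}
    (hQ : ∀ x ≠ 0, 0 < x ⬝ᵥ Q *ᵥ x) : ∃ ε > 0, ∀ x, ε * ‖x‖ ^ 2 ≤ x ⬝ᵥ Q *ᵥ x := by
  rcases subsingleton_or_nontrivial (m → ℝ) with h | h
  · exact ⟨1, one_pos, fun x => by simp [Subsingleton.elim x 0]⟩
  set f : (m → ℝ) → ℝ := fun x => x ⬝ᵥ Q *ᵥ x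
  have hf : Continuous f := by fun_prop
  obtain ⟨u, hu, hmin⟩ := (isCompact_sphere (0 : m → ℝ) 1).exists_isMinOn
    (NormedSpace.sphere_nonempty.mpr zero_le_one) hf.continuousOn
  refine ⟨f u, hQ u (Metric.ne_of_mem_sphere hu one_ne_zero), fun x => ?_⟩
  rcases eq_or_ne x 0 with rfl | hx
  · simp
  have hx' : ‖x‖⁻¹ • x ∈ Metric.sphere (0 : m → ℝ) 1 := by simp [norm_smul, hx]
  calc f u * ‖x‖ ^ 2 ≤ f (‖x‖⁻¹ • x) * ‖x‖ ^ 2 := by gcongr; exact hmin hx'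
    _ = f x := by
      simp only [f, mulVec_smul, smul_dotProduct, dotProduct_smul, smul_eq_mul]
      field_simp

theorem exists_pos_forall_mul_norm_sq_le_dotProduct_mulVec {T : Type*} [Finite T]
    {Q : T → Matrix m m ℝ} (hQ : ∀ t, ∀ x ≠ 0, 0 < x ⬝ᵥ Q t *ᵥ x) :
    ∃ ε > 0, ∀ t x, ε * ‖x‖ ^ 2 ≤ x ⬝ᵥ Q t *ᵥ x := by
  have h : ∀ t, ∀ᶠ ε in 𝓝[>] (0 : ℝ), ∀ x, ε * ‖x‖ ^ 2 ≤ x ⬝ᵥ Q t *ᵥ x := fun t => by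
    obtain ⟨ε₀, hε₀, hQε₀⟩ := exists_pos_mul_norm_sq_le_dotProduct_mulVec (hQ t)
    filter_upwards [Ioo_mem_nhdsGT hε₀] with ε hε x
    exact (mul_le_mul_of_nonneg_right hε.2.le (by positivity)).trans (hQε₀ x)
  obtain ⟨ε, hε, hεpos⟩ := ((eventually_all.2 h).and self_mem_nhdsWithin).exists
  exact ⟨ε, hεpos, hε⟩

theorem tendsto_zero_of_forall_mul_norm_sq_le {A P : ℕ → Matrix m m ℝ}
    (hP : ∀ k, (P k).PosSemidef) {ε : ℝ} (hε : 0 < ε)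
    (hdec : ∀ k y, ε * ‖y‖ ^ 2 ≤ y ⬝ᵥ (P k - (A k)ᵀ * P (k + 1) * A k) *ᵥ y)
    {x : ℕ → m → ℝ} (hx : ∀ k, x (k + 1) = A k *ᵥ x k) : Tendsto x atTop (𝓝 0) := by
  set V : ℕ → ℝ := fun k => x k ⬝ᵥ P k *ᵥ x k
  have hV : ∀ k, 0 ≤ V k := fun k => by simpa using (hP k).dotProduct_mulVec_nonneg (x k)
  have hstep : ∀ k, ε * ‖x k‖ ^ 2 ≤ V k - V (k + 1) := fun k => by
    simpa only [sub_mulVec, dotProduct_sub, dotProduct_transpose_mul_mul_mulVec, ← hx k]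
      using hdec k (x k)
  have hsum : Summable fun k => ε * ‖x k‖ ^ 2 := by
    refine summable_of_sum_range_le (c := V 0) (fun k => by positivity) fun N => ?_
    have h := Finset.sum_le_sum fun k (_ : k ∈ Finset.range N) => hstep k
    rw [Finset.sum_range_sub'] at h
    linarith [hV N]
  have h := (hsum.tendsto_atTop_zero.div_const ε).sqrt
  simp only [mul_div_cancel_left₀ _ hε.ne', Real.sqrt_sq (norm_nonneg _), zero_div,
    Real.sqrt_zero] at h
  exact tendsto_zero_iff_norm_tendsto_zero.2 h

end Matrix

theorem tsum_lt_tsum_of_forall_add_le {V a b : ℕ → ℝ} (hV : ∀ k, 0 ≤ V k) (hV0 : V 0 = 0)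
    (ha : ∀ k, 0 ≤ a k) (hb : ∀ k, 0 ≤ b k) (hbs : Summable b)
    (hstep : ∀ k, V (k + 1) + a k ≤ V k + b k) {k₀ : ℕ}
    (hk₀ : V (k₀ + 1) + a k₀ < V k₀ + b k₀) :
    Summable a ∧ ∑' k, a k < ∑' k, b k := by
  set c : ℕ → ℝ := fun k => V k - V (k + 1) + b k
  have hac : a ≤ c := fun k => by linarith [hstep k]
  have hc : ∀ N, ∑ k ∈ Finset.range N, c k ≤ ∑' k, b k := fun N => by
    have h : ∑ k ∈ Finset.range N, c k = V 0 - V N + ∑ k ∈ Finset.range N, b k := by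
      simp only [c, Finset.sum_add_distrib, Finset.sum_range_sub']
    linarith [hV N, hbs.sum_le_tsum (Finset.range N) fun k _ => hb k]
  have hcs : Summable c := summable_of_sum_range_le (fun k => (ha k).trans (hac k)) hc
  have has : Summable a := hcs.of_nonneg_of_le ha hac
  exact ⟨has, (has.tsum_lt_tsum hac (by linarith) hcs).trans_le (hcs.tsum_le_of_sum_range_le hc)⟩

section LMI

variable {α β δ : Type*} [Fintype α] [DecidableEq β] [DecidableEq δ]

def Ell2GainLMI (A : Matrix α α ℝ) (B : Matrix α β ℝ) (C : Matrix δ α ℝ) (D : Matrix δ β ℝ)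
    (Si Sj G : Matrix α α ℝ) (γ : ℝ) : Prop :=
  (fromBlocks (fromBlocks (G + Gᵀ - Si) 0 0 (γ • 1)) (fromBlocks (A * G)ᵀ (C * G)ᵀ Bᵀ Dᵀ)
    (fromBlocks (A * G) B (C * G) D) (fromBlocks Sj 0 0 (γ • 1))).PosDef

namespace Ell2GainLMI

variable {A : Matrix α α ℝ} {B : Matrix α β ℝ} {C : Matrix δ α ℝ} {D : Matrix δ β ℝ}
  {Si Sj G : Matrix α α ℝ} {γ : ℝ}

theorem posDef_right (hM : Ell2GainLMI A B C D Si Sj G γ) : Sj.PosDef := by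
  simpa using hM.toBlocks₂₂.toBlocks₁₁

variable [Fintype β] [Fintype δ] [DecidableEq α]

theorem dissipation (hM : Ell2GainLMI A B C D Si Sj G γ) (hγ : 0 < γ) (hSi : Si.PosDef)
    {x : α → ℝ} {w : β → ℝ} (hxw : x ≠ 0 ∨ w ≠ 0) :
    γ * ((A *ᵥ x + B *ᵥ w) ⬝ᵥ Sj⁻¹ *ᵥ (A *ᵥ x + B *ᵥ w)) + (C *ᵥ x + D *ᵥ w) ⬝ᵥ (C *ᵥ x + D *ᵥ w)
      < γ * (x ⬝ᵥ Si⁻¹ *ᵥ x) + γ ^ 2 * (w ⬝ᵥ w) := by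
  have hX : (G + Gᵀ - Si).PosDef := by simpa using hM.toBlocks₁₁.toBlocks₁₁
  obtain ⟨ξ, rfl⟩ :=
    mulVec_surjective_iff_isUnit.mpr (isUnit_of_posDef_add_transpose_sub hSi hX) x
  have ha : Sum.elim ξ w ≠ 0 := by
    rintro h0
    have hξ : ξ = 0 := by simpa using congr_arg (· ∘ Sum.inl) h0
    have hw : w = 0 := by simpa using congr_arg (· ∘ Sum.inr) h0
    simp [hξ, hw] at hxw
  have hγinv : (γ • (1 : Matrix δ δ ℝ))⁻¹ = γ⁻¹ • 1 :=
    inv_eq_left_inv (by rw [smul_mul_smul_comm, one_mul, inv_mul_cancel₀ hγ.ne', one_smul])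
  have key := PosDef.dotProduct_inv_mulVec_lt
    (by rw [Ell2GainLMI, ← fromBlocks_transpose] at hM; exact hM) ha
  rw [inv_fromBlocks_zero₂₁_of_isUnit_iff _ _ _ (iff_of_true hM.posDef_right.isUnit
    (by simpa using hM.toBlocks₂₂.toBlocks₂₂.isUnit)), hγinv] at key
  simp only [fromBlocks_mulVec, ← mulVec_mulVec, sumElim_dotProduct_sumElim, Sum.elim_comp_inl,
    Sum.elim_comp_inr, zero_mulVec, Matrix.mul_zero, Matrix.zero_mul, neg_zero, add_zero, zero_add,
    smul_mulVec, one_mulVec, dotProduct_smul, smul_eq_mul] at key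
  have hG := dotProduct_add_transpose_sub_mulVec_le hSi G ξ
  have hr := mul_inv_cancel_left₀ hγ.ne' ((C *ᵥ G *ᵥ ξ + D *ᵥ w) ⬝ᵥ (C *ᵥ G *ᵥ ξ + D *ᵥ w))
  linarith [mul_lt_mul_of_pos_left key hγ, mul_le_mul_of_nonneg_left hG hγ.le]

theorem dissipation_le (hM : Ell2GainLMI A B C D Si Sj G γ) (hγ : 0 < γ) (hSi : Si.PosDef)
    (x : α → ℝ) (w : β → ℝ) :
    γ * ((A *ᵥ x + B *ᵥ w) ⬝ᵥ Sj⁻¹ *ᵥ (A *ᵥ x + B *ᵥ w)) + (C *ᵥ x + D *ᵥ w) ⬝ᵥ (C *ᵥ x + D *ᵥ w)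
      ≤ γ * (x ⬝ᵥ Si⁻¹ *ᵥ x) + γ ^ 2 * (w ⬝ᵥ w) := by
  by_cases hxw : x = 0 ∧ w = 0
  · simp [hxw.1, hxw.2]
  · exact (hM.dissipation hγ hSi (not_and_or.mp hxw)).le

theorem dotProduct_inv_sub_transpose_mul_mul_mulVec_pos (hM : Ell2GainLMI A B C D Si Sj G γ)
    (hγ : 0 < γ) (hSi : Si.PosDef) {y : α → ℝ} (hy : y ≠ 0) :
    0 < y ⬝ᵥ (Si⁻¹ - Aᵀ * Sj⁻¹ * A) *ᵥ y := by
  have h := hM.dissipation hγ hSi (Or.inl hy) (w := 0)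
  simp only [mulVec_zero, add_zero, dotProduct_zero, mul_zero] at h
  have hC : 0 ≤ C *ᵥ y ⬝ᵥ C *ᵥ y := by rw [dotProduct_self_eq_sum_sq]; positivity
  rw [sub_mulVec, dotProduct_sub, dotProduct_transpose_mul_mul_mulVec, sub_pos]
  exact lt_of_mul_lt_mul_left (by linarith) hγ.le

end Ell2GainLMI

end LMI

theorem Ell2GainLMI.tsum_sq_output_lt {α : Type*} [Fintype α] [DecidableEq α] {β δ : ℕ → Type*} [∀ k, Fintype (β k)] [∀ k, Fintype (δ k)]
    [∀ k, DecidableEq (β k)] [∀ k, DecidableEq (δ k)] {A : ℕ → Matrix α α ℝ}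
    {B : (k : ℕ) → Matrix α (β k) ℝ} {C : (k : ℕ) → Matrix (δ k) α ℝ}
    {D : (k : ℕ) → Matrix (δ k) (β k) ℝ} {S G : ℕ → Matrix α α ℝ} {γ : ℝ}
    (hM : ∀ k, Ell2GainLMI (A k) (B k) (C k) (D k) (S k) (S (k + 1)) (G k) γ) (hγ : 0 < γ)
    (hS : ∀ k, (S k).PosDef) (x : ℕ → α → ℝ) (w : (k : ℕ) → β k → ℝ) (z : (k : ℕ) → δ k → ℝ)
    (hx0 : x 0 = 0) (hx : ∀ k, x (k + 1) = A k *ᵥ x k + B k *ᵥ w k)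
    (hz : ∀ k, z k = C k *ᵥ x k + D k *ᵥ w k)
    (hpos : 0 < ∑' k, ENNReal.ofReal (∑ i, w k i ^ 2))
    (hfin : ∑' k, ENNReal.ofReal (∑ i, w k i ^ 2) < ⊤) :
    ∑' k, ENNReal.ofReal (∑ i, z k i ^ 2) <
      ENNReal.ofReal γ ^ 2 * ∑' k, ENNReal.ofReal (∑ i, w k i ^ 2) := by
  obtain ⟨k₀, hk₀⟩ : ∃ k, w k ≠ 0 := by
    by_contra! h
    simp [h] at hpos
  have hws : Summable fun k => ∑ i, w k i ^ 2 := by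
    simpa [ENNReal.toReal_ofReal, Finset.sum_nonneg, sq_nonneg] using
      ENNReal.summable_toReal hfin.ne
  set V : ℕ → ℝ := fun k => γ * (x k ⬝ᵥ (S k)⁻¹ *ᵥ x k)
  have hV : ∀ k, 0 ≤ V k := fun k =>
    mul_nonneg hγ.le (by simpa using (hS k).inv.posSemidef.dotProduct_mulVec_nonneg (x k))
  have hstep : ∀ k, V (k + 1) + ∑ i, z k i ^ 2 ≤ V k + γ ^ 2 * ∑ i, w k i ^ 2 := fun k => by
    simpa only [V, hx k, hz k, dotProduct_self_eq_sum_sq] using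
      (hM k).dissipation_le hγ (hS k) (x k) (w k)
  have hstrict : V (k₀ + 1) + ∑ i, z k₀ i ^ 2 < V k₀ + γ ^ 2 * ∑ i, w k₀ i ^ 2 := by
    simpa only [V, hx k₀, hz k₀, dotProduct_self_eq_sum_sq] using
      (hM k₀).dissipation hγ (hS k₀) (Or.inr hk₀)
  obtain ⟨hzs, hlt⟩ := tsum_lt_tsum_of_forall_add_le hV (by simp [V, hx0])
    (fun k => by positivity) (fun k => by positivity) (hws.mul_left _) hstep hstrict
  rw [tsum_mul_left] at hlt
  rw [← ENNReal.ofReal_tsum_of_nonneg (fun k => by positivity) hzs,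
    ← ENNReal.ofReal_tsum_of_nonneg (fun k => by positivity) hws, ← ENNReal.ofReal_pow hγ.le,
    ← ENNReal.ofReal_mul (by positivity), ENNReal.ofReal_lt_ofReal_iff']
  exact ⟨hlt, (tsum_nonneg fun k => by positivity).trans_lt hlt⟩

theorem stmt1_general
    (s n q p nV : ℕ)
    (At : Fin s → Matrix (Fin n) (Fin n) ℝ)
    (Bw : (l : Fin s) → Matrix (Fin n) (Fin ((l : ℕ) + 1) × Fin q) ℝ)
    (Ct : (l : Fin s) → Matrix (Fin ((l : ℕ) + 1) × Fin p) (Fin n) ℝ)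
    (Dw : (l : Fin s) → Matrix (Fin ((l : ℕ) + 1) × Fin p) (Fin ((l : ℕ) + 1) × Fin q) ℝ)
    (E : Set (Fin nV × Fin nV × Fin s))
    (hin : ∀ j : Fin nV, ∃ i l, (i, j, l) ∈ E)
    (γ : ℝ) (hγ : 0 < γ)
    (S G : Fin nV → Matrix (Fin n) (Fin n) ℝ)
    (hLMI : ∀ i j l, (i, j, l) ∈ E →
      (Matrix.fromBlocks
        (Matrix.fromBlocks (G i + (G i)ᵀ - S i) 0 0
          (γ • (1 : Matrix (Fin ((l : ℕ) + 1) × Fin q) (Fin ((l : ℕ) + 1) × Fin q) ℝ)))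
        (Matrix.fromBlocks (At l * G i)ᵀ (Ct l * G i)ᵀ (Bw l)ᵀ (Dw l)ᵀ)
        (Matrix.fromBlocks (At l * G i) (Bw l) (Ct l * G i) (Dw l))
        (Matrix.fromBlocks (S j) 0 0
          (γ • (1 : Matrix (Fin ((l : ℕ) + 1) × Fin p) (Fin ((l : ℕ) + 1) × Fin p) ℝ)))).PosDef) :
    ∀ σ : ℕ → Fin s,
      (∃ v : ℕ → Fin nV, ∀ k, (v k, v (k + 1), σ k) ∈ E) →
      -- (i) internal (asymptotic) stability for zero performance input
      ((∀ x : ℕ → Fin n → ℝ,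
          (∀ k, x (k + 1) = (At (σ k)).mulVec (x k)) →
          Tendsto x atTop (nhds 0)) ∧
      -- (ii) ℓ2-gain bound for zero initial state
       (∀ (x : ℕ → Fin n → ℝ)
          (w : (k : ℕ) → Fin ((σ k : ℕ) + 1) × Fin q → ℝ)
          (z : (k : ℕ) → Fin ((σ k : ℕ) + 1) × Fin p → ℝ),
          x 0 = 0 →
          (∀ k, x (k + 1) = (At (σ k)).mulVec (x k) + (Bw (σ k)).mulVec (w k)) →
          (∀ k, z k = (Ct (σ k)).mulVec (x k) + (Dw (σ k)).mulVec (w k)) →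
          0 < ∑' k, ENNReal.ofReal (∑ i, (w k i) ^ 2) →
          (∑' k, ENNReal.ofReal (∑ i, (w k i) ^ 2)) < ⊤ →
          (∑' k, ENNReal.ofReal (∑ i, (z k i) ^ 2)) <
            ENNReal.ofReal γ ^ 2 * ∑' k, ENNReal.ofReal (∑ i, (w k i) ^ 2))) := by
  rintro σ ⟨v, hv⟩
  have hS : ∀ j, (S j).PosDef := fun j =>
    let ⟨i, l, he⟩ := hin j
    Ell2GainLMI.posDef_right (hLMI i j l he)
  obtain ⟨ε, hε, hdec⟩ := Matrix.exists_pos_forall_mul_norm_sq_le_dotProduct_mulVec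
    (Q := fun e : E => (S e.1.1)⁻¹ - (At e.1.2.2)ᵀ * (S e.1.2.1)⁻¹ * At e.1.2.2)
    fun ⟨(i, j, l), he⟩ _ =>
      Ell2GainLMI.dotProduct_inv_sub_transpose_mul_mul_mulVec_pos (hLMI i j l he) hγ (hS i)
  exact ⟨fun x hx => Matrix.tendsto_zero_of_forall_mul_norm_sq_le
      (fun k => (hS (v k)).inv.posSemidef) hε (fun k => hdec ⟨_, hv k⟩) hx,
    Ell2GainLMI.tsum_sq_output_lt (fun k => hLMI _ _ _ (hv k)) hγ (fun k => hS (v k))⟩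

/-- ℓ2-performance analysis for the lifted constrained switched linear
system over the label set L = {0,…,s−1}, with label-dependent input and output
dimensions (for mode l the input lives in ℝ^{(l+1)q} and the output in ℝ^{(l+1)p}). -/
theorem stmt1
    (s n q p nV : ℕ) (hs : 1 ≤ s)
    (At : Fin s → Matrix (Fin n) (Fin n) ℝ)
    (Bw : (l : Fin s) → Matrix (Fin n) (Fin ((l : ℕ) + 1) × Fin q) ℝ)
    (Ct : (l : Fin s) → Matrix (Fin ((l : ℕ) + 1) × Fin p) (Fin n) ℝ)
    (Dw : (l : Fin s) → Matrix (Fin ((l : ℕ) + 1) × Fin p) (Fin ((l : ℕ) + 1) × Fin q) ℝ)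
    (E : Set (Fin nV × Fin nV × Fin s))
    (hout : ∀ i : Fin nV, ∃ j l, (i, j, l) ∈ E)
    (hin : ∀ j : Fin nV, ∃ i l, (i, j, l) ∈ E)
    (γ : ℝ) (hγ : 0 < γ)
    (S G : Fin nV → Matrix (Fin n) (Fin n) ℝ)
    (hSsymm : ∀ i, (S i).IsSymm)
    (hLMI : ∀ i j l, (i, j, l) ∈ E →
      (Matrix.fromBlocks
        (Matrix.fromBlocks (G i + (G i)ᵀ - S i) 0 0
          (γ • (1 : Matrix (Fin ((l : ℕ) + 1) × Fin q) (Fin ((l : ℕ) + 1) × Fin q) ℝ)))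
        (Matrix.fromBlocks (At l * G i)ᵀ (Ct l * G i)ᵀ (Bw l)ᵀ (Dw l)ᵀ)
        (Matrix.fromBlocks (At l * G i) (Bw l) (Ct l * G i) (Dw l))
        (Matrix.fromBlocks (S j) 0 0
          (γ • (1 : Matrix (Fin ((l : ℕ) + 1) × Fin p) (Fin ((l : ℕ) + 1) × Fin p) ℝ)))).PosDef) :
    ∀ σ : ℕ → Fin s,
      (∃ v : ℕ → Fin nV, ∀ k, (v k, v (k + 1), σ k) ∈ E) →
      -- (i) internal (asymptotic) stability for zero performance input
      ((∀ x : ℕ → Fin n → ℝ,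
          (∀ k, x (k + 1) = (At (σ k)).mulVec (x k)) →
          Tendsto x atTop (nhds 0)) ∧
      -- (ii) ℓ2-gain bound for zero initial state
       (∀ (x : ℕ → Fin n → ℝ)
          (w : (k : ℕ) → Fin ((σ k : ℕ) + 1) × Fin q → ℝ)
          (z : (k : ℕ) → Fin ((σ k : ℕ) + 1) × Fin p → ℝ),
          x 0 = 0 →
          (∀ k, x (k + 1) = (At (σ k)).mulVec (x k) + (Bw (σ k)).mulVec (w k)) →
          (∀ k, z k = (Ct (σ k)).mulVec (x k) + (Dw (σ k)).mulVec (w k)) →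
          0 < ∑' k, ENNReal.ofReal (∑ i, (w k i) ^ 2) →
          (∑' k, ENNReal.ofReal (∑ i, (w k i) ^ 2)) < ⊤ →
          (∑' k, ENNReal.ofReal (∑ i, (z k i) ^ 2)) <
            ENNReal.ofReal γ ^ 2 * ∑' k, ENNReal.ofReal (∑ i, (w k i) ^ 2))) :=
  stmt1_general s n q p nV At Bw Ct Dw E hin γ hγ S G hLMI
end

section
/- Consider a constrained switched linear system (CSS) over a finite label set L with matrices A_l ∈ ℝ^{n×n}, B_l ∈ ℝ^{n×q}, C_l ∈ ℝ^{p×n}, D_l ∈ ℝ^{p×q}, and a switching graph G = (V,E) over L. Suppose γ > 0 and there exist symmetric positive definite matrices P_i ∈ ℝ^{n×n}, i ∈ V, such that for every edge (i,j,l) ∈ E the block matrix [[A_lᵀ P_j A_l + γ^{−1} C_lᵀ C_l − P_i, A_lᵀ P_j B_l + γ^{−1} C_lᵀ D_l], [B_lᵀ P_j A_l + γ^{−1} D_lᵀ C_l, B_lᵀ P_j B_l + γ^{−1} D_lᵀ D_l − γ I_q]] is negative definite. Then the CSS has ℓ2-performance with gain γ with respect to the set of switching sequences admissible for G. -/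
/-!
Along an admissible trajectory with node sequence `v`, expanding the quadratic form of the LMI
block matrix at `(xₖ, wₖ)` shows that the storage `Vₖ = xₖᵀ P_{vₖ} xₖ` satisfies
`V_{k+1} + γ⁻¹ ‖zₖ‖² + δₖ = Vₖ + γ ‖wₖ‖²`, where `δₖ` is the quadratic form of the negated block
matrix of the edge taken at step `k`. As there are finitely many edges, `δₖ ≥ ε ‖(xₖ, wₖ)‖²` for
a single `ε > 0`. For `w = 0` this gives `ε ∑ ‖xₖ‖² ≤ V₀`, so `xₖ → 0`. For `x₀ = 0` summation gives
`γ⁻¹ ∑ ‖zₖ‖² + ∑ δₖ ≤ γ ∑ ‖wₖ‖²`, and the inequality of the gain is strict because `δₖ > 0` at any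
step with `wₖ ≠ 0`.
-/

open Matrix Filter Topology

theorem add_sum_range_le_of_succ_add_le {V s : ℕ → ℝ} (h : ∀ k, V (k + 1) + s k ≤ V k)
    (N : ℕ) : V N + ∑ k ∈ Finset.range N, s k ≤ V 0 := by
  induction N with
  | zero => simp
  | succ N ih => rw [Finset.sum_range_succ]; linarith [h N]

section DotProduct

variable {ι R : Type*} [Fintype ι] [Ring R] [LinearOrder R] [IsStrictOrderedRing R]

theorem dotProduct_self_nonneg (x : ι → R) : 0 ≤ x ⬝ᵥ x :=
  Finset.sum_nonneg fun i _ => mul_self_nonneg (x i)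

theorem sq_le_dotProduct_self (x : ι → R) (i : ι) : x i ^ 2 ≤ x ⬝ᵥ x := by
  rw [sq]
  exact Finset.single_le_sum (f := fun j => x j * x j) (fun j _ => mul_self_nonneg (x j))
    (Finset.mem_univ i)

theorem tendsto_zero_of_tendsto_dotProduct_self {α : Type*} {l : Filter α} {x : α → ι → ℝ}
    (h : Tendsto (fun k => x k ⬝ᵥ x k) l (𝓝 0)) : Tendsto x l (𝓝 0) := by
  refine squeeze_zero_norm (fun k => (pi_norm_le_iff_of_nonneg (Real.sqrt_nonneg _)).2
    fun i => ?_) (by simpa using h.sqrt)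
  exact (Real.norm_eq_abs _).trans_le (Real.abs_le_sqrt (sq_le_dotProduct_self _ i))

end DotProduct

theorem dotProduct_transpose_mulVec_eq_mulVec_dotProduct {r s R : Type*} [Fintype r] [Fintype s]
    [CommSemiring R] (M : Matrix r s R) (u : s → R) (y : r → R) : u ⬝ᵥ Mᵀ *ᵥ y = M *ᵥ u ⬝ᵥ y := by
  rw [dotProduct_mulVec, vecMul_transpose]

section PosDef

variable {ι : Type*} [Fintype ι] [DecidableEq ι]

open scoped MatrixOrder in
theorem Matrix.PosDef.exists_pos_mul_dotProduct_self_le {M : Matrix ι ι ℝ} (hM : M.PosDef) :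
    ∃ r > 0, ∀ x : ι → ℝ, r * (x ⬝ᵥ x) ≤ x ⬝ᵥ M *ᵥ x := by
  cases isEmpty_or_nonempty ι
  · exact ⟨1, one_pos, fun x => by simp [dotProduct]⟩
  obtain ⟨r, hr, hle⟩ := (CFC.exists_pos_algebraMap_le_iff hM.isHermitian.isSelfAdjoint).2 <| by
    rw [hM.isHermitian.spectrum_real_eq_range_eigenvalues]
    rintro _ ⟨i, rfl⟩
    exact hM.eigenvalues_pos i
  refine ⟨r, hr, fun x => ?_⟩
  simpa [sub_mulVec, Algebra.algebraMap_eq_smul_one, smul_mulVec] using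
    (Matrix.le_iff.1 hle).dotProduct_mulVec_nonneg x

theorem Set.Finite.exists_pos_mul_dotProduct_self_le {κ : Type*} {s : Set κ} (hs : s.Finite)
    {M : κ → Matrix ι ι ℝ} (hM : ∀ k ∈ s, (M k).PosDef) :
    ∃ r > 0, ∀ k ∈ s, ∀ x : ι → ℝ, r * (x ⬝ᵥ x) ≤ x ⬝ᵥ M k *ᵥ x := by
  have hev : ∀ k ∈ s, ∀ᶠ r in 𝓝[>] (0 : ℝ), ∀ x : ι → ℝ, r * (x ⬝ᵥ x) ≤ x ⬝ᵥ M k *ᵥ x := by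
    intro k hk
    obtain ⟨r, hr, hle⟩ := (hM k hk).exists_pos_mul_dotProduct_self_le
    filter_upwards [Ioc_mem_nhdsGT hr] with t ht x
    exact (mul_le_mul_of_nonneg_right ht.2 (dotProduct_self_nonneg x)).trans (hle x)
  obtain ⟨r, hr, hpos⟩ := ((hs.eventually_all.2 hev).and self_mem_nhdsWithin).exists
  exact ⟨r, hpos, hr⟩

end PosDef

theorem tendsto_zero_of_lyapunov {ι : Type*} [Fintype ι] {x : ℕ → ι → ℝ} {V : ℕ → ℝ} {ε : ℝ}
    (hε : 0 < ε) (hV : ∀ k, 0 ≤ V k) (hdec : ∀ k, V (k + 1) + ε * (x k ⬝ᵥ x k) ≤ V k) :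
    Tendsto x atTop (𝓝 0) := by
  have hsum : Summable fun k => ε * (x k ⬝ᵥ x k) :=
    summable_of_sum_range_le (c := V 0) (fun k => mul_nonneg hε.le (dotProduct_self_nonneg (x k)))
      fun N => by linarith [add_sum_range_le_of_succ_add_le (V := V) hdec N, hV N]
  exact tendsto_zero_of_tendsto_dotProduct_self
    ((summable_mul_left_iff hε.ne').1 hsum).tendsto_atTop_zero

section Dissipation

variable {V a b δ : ℕ → ℝ} {γ : ℝ}

theorem tsum_lt_sq_mul_tsum_of_dissipation {k₀ : ℕ} (hγ : 0 < γ) (hV₀ : V 0 = 0)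
    (hV : ∀ k, 0 ≤ V k) (ha : ∀ k, 0 ≤ a k) (hb : ∀ k, 0 ≤ b k) (hb_sum : Summable b)
    (hδ : ∀ k, 0 ≤ δ k) (hδk₀ : 0 < δ k₀)
    (hstep : ∀ k, V (k + 1) + (γ⁻¹ * a k + δ k) ≤ V k + γ * b k) :
    Summable a ∧ ∑' k, a k < γ ^ 2 * ∑' k, b k := by
  have hγa : ∀ k, 0 ≤ γ⁻¹ * a k := fun k => mul_nonneg (inv_nonneg.2 hγ.le) (ha k)
  have hf : ∀ k, 0 ≤ γ⁻¹ * a k + δ k := fun k => add_nonneg (hγa k) (hδ k)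
  have hpartial : ∀ N, ∑ k ∈ Finset.range N, (γ⁻¹ * a k + δ k) ≤ γ * ∑' k, b k := fun N => by
    have := add_sum_range_le_of_succ_add_le (V := V) (s := fun k => γ⁻¹ * a k + δ k - γ * b k)
      (fun k => by linarith [hstep k]) N
    rw [Finset.sum_sub_distrib, ← Finset.mul_sum, hV₀] at this
    linarith [hV N, mul_le_mul_of_nonneg_left
      (hb_sum.sum_le_tsum (Finset.range N) fun k _ => hb k) hγ.le]
  have hf_sum := summable_of_sum_range_le hf hpartial
  have hγa_sum : Summable fun k => γ⁻¹ * a k :=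
    hf_sum.of_nonneg_of_le hγa fun k => le_add_of_nonneg_right (hδ k)
  have hlt : γ⁻¹ * ∑' k, a k < γ * ∑' k, b k :=
    calc γ⁻¹ * ∑' k, a k = ∑' k, γ⁻¹ * a k := tsum_mul_left.symm
      _ < ∑' k, (γ⁻¹ * a k + δ k) := Summable.tsum_lt_tsum_of_nonneg hγa
          (fun k => le_add_of_nonneg_right (hδ k)) (lt_add_of_pos_right _ hδk₀) hf_sum
      _ ≤ γ * ∑' k, b k := Real.tsum_le_of_sum_range_le hf hpartial
  refine ⟨(summable_mul_left_iff (inv_ne_zero hγ.ne')).1 hγa_sum, ?_⟩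
  rw [inv_mul_lt_iff₀ hγ] at hlt
  linarith

theorem tsum_ofReal_lt_of_dissipation (hγ : 0 < γ) (hV₀ : V 0 = 0) (hV : ∀ k, 0 ≤ V k)
    (ha : ∀ k, 0 ≤ a k) (hb : ∀ k, 0 ≤ b k) (hδ : ∀ k, 0 ≤ δ k)
    (hδ_pos : ∀ k, b k ≠ 0 → 0 < δ k) (hb_pos : 0 < ∑' k, ENNReal.ofReal (b k))
    (hb_fin : ∑' k, ENNReal.ofReal (b k) < ⊤)
    (hstep : ∀ k, V (k + 1) + (γ⁻¹ * a k + δ k) ≤ V k + γ * b k) :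
    ∑' k, ENNReal.ofReal (a k) < ENNReal.ofReal γ ^ 2 * ∑' k, ENNReal.ofReal (b k) := by
  obtain ⟨k₀, hk₀⟩ : ∃ k, b k ≠ 0 := by
    by_contra! h
    simp [h] at hb_pos
  have hb_sum : Summable b :=
    (ENNReal.summable_toReal hb_fin.ne).congr fun k => ENNReal.toReal_ofReal (hb k)
  obtain ⟨ha_sum, hlt⟩ := tsum_lt_sq_mul_tsum_of_dissipation hγ hV₀ hV ha hb hb_sum hδ
    (hδ_pos k₀ hk₀) hstep
  rw [← ENNReal.ofReal_tsum_of_nonneg ha ha_sum, ← ENNReal.ofReal_tsum_of_nonneg hb hb_sum,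
    ← ENNReal.ofReal_pow hγ.le, ← ENNReal.ofReal_mul (by positivity)]
  exact (ENNReal.ofReal_lt_ofReal_iff_of_nonneg (tsum_nonneg ha)).2 hlt

end Dissipation

section BoundedReal

variable {n q p : Type*} [Fintype n] [Fintype q] [Fintype p] [DecidableEq q]

noncomputable def boundedRealMatrix (A : Matrix n n ℝ) (B : Matrix n q ℝ) (C : Matrix p n ℝ)
    (D : Matrix p q ℝ) (Pᵢ Pⱼ : Matrix n n ℝ) (γ : ℝ) : Matrix (n ⊕ q) (n ⊕ q) ℝ :=
  fromBlocks (Aᵀ * Pⱼ * A + γ⁻¹ • (Cᵀ * C) - Pᵢ) (Aᵀ * Pⱼ * B + γ⁻¹ • (Cᵀ * D))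
    (Bᵀ * Pⱼ * A + γ⁻¹ • (Dᵀ * C)) (Bᵀ * Pⱼ * B + γ⁻¹ • (Dᵀ * D) - γ • 1)

theorem storage_add_dissipation_eq {A : Matrix n n ℝ} {B : Matrix n q ℝ} {C : Matrix p n ℝ}
    {D : Matrix p q ℝ} {Pᵢ Pⱼ : Matrix n n ℝ} {γ : ℝ} {x x' : n → ℝ} {w : q → ℝ} {z : p → ℝ}
    (hx' : x' = A *ᵥ x + B *ᵥ w) (hz : z = C *ᵥ x + D *ᵥ w) :
    x' ⬝ᵥ Pⱼ *ᵥ x' + (γ⁻¹ * (z ⬝ᵥ z)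
        + Sum.elim x w ⬝ᵥ (-boundedRealMatrix A B C D Pᵢ Pⱼ γ) *ᵥ Sum.elim x w) =
      x ⬝ᵥ Pᵢ *ᵥ x + γ * (w ⬝ᵥ w) := by
  subst hx' hz
  rw [neg_mulVec, dotProduct_neg, boundedRealMatrix, fromBlocks_mulVec,
    sumElim_dotProduct_sumElim]
  simp only [add_mulVec, sub_mulVec, mulVec_add, smul_mulVec, dotProduct_add, dotProduct_sub,
    dotProduct_smul, add_dotProduct, ← mulVec_mulVec,
    dotProduct_transpose_mulVec_eq_mulVec_dotProduct, one_mulVec, smul_eq_mul,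
    Sum.elim_comp_inl, Sum.elim_comp_inr]
  ring

end BoundedReal

theorem stmt12_general
    (L : Type) [Fintype L]
    (n q p nV : ℕ)
    (A : L → Matrix (Fin n) (Fin n) ℝ)
    (B : L → Matrix (Fin n) (Fin q) ℝ)
    (C : L → Matrix (Fin p) (Fin n) ℝ)
    (D : L → Matrix (Fin p) (Fin q) ℝ)
    (E : Set (Fin nV × Fin nV × L))
    (γ : ℝ) (hγ : 0 < γ)
    (P : Fin nV → Matrix (Fin n) (Fin n) ℝ)
    (hPpd : ∀ i, (P i).PosDef)
    (hLMI : ∀ i j l, (i, j, l) ∈ E →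
      (-(Matrix.fromBlocks
          ((A l)ᵀ * P j * A l + γ⁻¹ • ((C l)ᵀ * C l) - P i)
          ((A l)ᵀ * P j * B l + γ⁻¹ • ((C l)ᵀ * D l))
          ((B l)ᵀ * P j * A l + γ⁻¹ • ((D l)ᵀ * C l))
          ((B l)ᵀ * P j * B l + γ⁻¹ • ((D l)ᵀ * D l) -
            γ • (1 : Matrix (Fin q) (Fin q) ℝ)))).PosDef) :
    ∀ σ : ℕ → L,
      (∃ v : ℕ → Fin nV, ∀ k, (v k, v (k + 1), σ k) ∈ E) →
      -- (i) internal (asymptotic) stability for zero performance input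
      ((∀ x : ℕ → Fin n → ℝ,
          (∀ k, x (k + 1) = (A (σ k)).mulVec (x k)) →
          Tendsto x atTop (nhds 0)) ∧
      -- (ii) ℓ2-gain bound for zero initial state
       (∀ (x : ℕ → Fin n → ℝ) (w : ℕ → Fin q → ℝ) (z : ℕ → Fin p → ℝ),
          x 0 = 0 →
          (∀ k, x (k + 1) = (A (σ k)).mulVec (x k) + (B (σ k)).mulVec (w k)) →
          (∀ k, z k = (C (σ k)).mulVec (x k) + (D (σ k)).mulVec (w k)) →
          0 < ∑' k, ENNReal.ofReal (∑ i, (w k i) ^ 2) →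
          (∑' k, ENNReal.ofReal (∑ i, (w k i) ^ 2)) < ⊤ →
          (∑' k, ENNReal.ofReal (∑ i, (z k i) ^ 2)) <
            ENNReal.ofReal γ ^ 2 * ∑' k, ENNReal.ofReal (∑ i, (w k i) ^ 2))) := by
  rintro σ ⟨v, hv⟩
  have hV : ∀ i (x : Fin n → ℝ), 0 ≤ x ⬝ᵥ P i *ᵥ x := fun i x => by
    simpa using (hPpd i).posSemidef.dotProduct_mulVec_nonneg x
  constructor
  · intro x hx
    obtain ⟨ε, hε, hεE⟩ := (Set.toFinite E).exists_pos_mul_dotProduct_self_le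
      (M := fun e => -boundedRealMatrix (A e.2.2) (B e.2.2) (C e.2.2) (D e.2.2) (P e.1) (P e.2.1) γ)
      fun e he => hLMI e.1 e.2.1 e.2.2 he
    refine tendsto_zero_of_lyapunov hε (fun k => hV (v k) (x k)) fun k => ?_
    have hdec := storage_add_dissipation_eq (C := C (σ k)) (D := D (σ k)) (Pᵢ := P (v k))
      (Pⱼ := P (v (k + 1))) (γ := γ)
      (show x (k + 1) = A (σ k) *ᵥ x k + B (σ k) *ᵥ 0 by simp [hx k]) rfl
    have hεk := hεE _ (hv k) (Sum.elim (x k) 0)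
    simp only [sumElim_dotProduct_sumElim, mulVec_zero, dotProduct_zero, add_zero, mul_zero]
      at hdec hεk
    linarith [mul_nonneg (inv_nonneg.2 hγ.le) (dotProduct_self_nonneg (C (σ k) *ᵥ x k))]
  · intro x w z hx₀ hx hz hw_pos hw_fin
    have hsq : ∀ {m : ℕ} (y : Fin m → ℝ), ∑ i, y i ^ 2 = y ⬝ᵥ y := fun y => by
      simp [dotProduct, sq]
    simp only [hsq] at hw_pos hw_fin ⊢
    refine tsum_ofReal_lt_of_dissipation hγ (by simp [hx₀]) (fun k => hV (v k) (x k))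
      (fun k => dotProduct_self_nonneg _) (fun k => dotProduct_self_nonneg _) (fun k => ?_)
      (fun k hw => ?_) hw_pos hw_fin fun k => (storage_add_dissipation_eq (hx k) (hz k)).le
    · exact (hLMI _ _ _ (hv k)).posSemidef.dotProduct_mulVec_nonneg _
    · refine (hLMI _ _ _ (hv k)).dotProduct_mulVec_pos (x := Sum.elim (x k) (w k)) ?_
      rw [← Sum.elim_zero_zero, Ne, Sum.elim_eq_iff]
      exact fun h => hw (by simp [h.2])

/-- ℓ2-performance analysis of a constrained switched linear system
via node-dependent quadratic Lyapunov certificates P_i (negative definiteness of a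
matrix M is expressed as positive definiteness of −M). -/
theorem stmt12
    (L : Type) [Fintype L]
    (n q p nV : ℕ)
    (A : L → Matrix (Fin n) (Fin n) ℝ)
    (B : L → Matrix (Fin n) (Fin q) ℝ)
    (C : L → Matrix (Fin p) (Fin n) ℝ)
    (D : L → Matrix (Fin p) (Fin q) ℝ)
    (E : Set (Fin nV × Fin nV × L))
    (hout : ∀ i : Fin nV, ∃ j l, (i, j, l) ∈ E)
    (hin : ∀ j : Fin nV, ∃ i l, (i, j, l) ∈ E)
    (γ : ℝ) (hγ : 0 < γ)
    (P : Fin nV → Matrix (Fin n) (Fin n) ℝ)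
    (hPsymm : ∀ i, (P i).IsSymm)
    (hPpd : ∀ i, (P i).PosDef)
    (hLMI : ∀ i j l, (i, j, l) ∈ E →
      (-(Matrix.fromBlocks
          ((A l)ᵀ * P j * A l + γ⁻¹ • ((C l)ᵀ * C l) - P i)
          ((A l)ᵀ * P j * B l + γ⁻¹ • ((C l)ᵀ * D l))
          ((B l)ᵀ * P j * A l + γ⁻¹ • ((D l)ᵀ * C l))
          ((B l)ᵀ * P j * B l + γ⁻¹ • ((D l)ᵀ * D l) -
            γ • (1 : Matrix (Fin q) (Fin q) ℝ)))).PosDef) :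
    ∀ σ : ℕ → L,
      (∃ v : ℕ → Fin nV, ∀ k, (v k, v (k + 1), σ k) ∈ E) →
      -- (i) internal (asymptotic) stability for zero performance input
      ((∀ x : ℕ → Fin n → ℝ,
          (∀ k, x (k + 1) = (A (σ k)).mulVec (x k)) →
          Tendsto x atTop (nhds 0)) ∧
      -- (ii) ℓ2-gain bound for zero initial state
       (∀ (x : ℕ → Fin n → ℝ) (w : ℕ → Fin q → ℝ) (z : ℕ → Fin p → ℝ),
          x 0 = 0 →
          (∀ k, x (k + 1) = (A (σ k)).mulVec (x k) + (B (σ k)).mulVec (w k)) →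
          (∀ k, z k = (C (σ k)).mulVec (x k) + (D (σ k)).mulVec (w k)) →
          0 < ∑' k, ENNReal.ofReal (∑ i, (w k i) ^ 2) →
          (∑' k, ENNReal.ofReal (∑ i, (w k i) ^ 2)) < ⊤ →
          (∑' k, ENNReal.ofReal (∑ i, (z k i) ^ 2)) <
            ENNReal.ofReal γ ^ 2 * ∑' k, ENNReal.ofReal (∑ i, (w k i) ^ 2))) :=
  stmt12_general L n q p nV A B C D E γ hγ P hPpd hLMI
end
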